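/- If Z is a symmetric matrix, A is Schur stable, Σ ≻ 0 with Lyapunov solution Y (A Y Aᵀ + Σ = Y), and W is symmetric with Z − A Z Aᵀ ⪯ c·Σ for some c ≥ 0, then Z ⪯ c·Y. -/

import Mathlib

/-!
With `M := c • Y - Z`, the Lyapunov equation for `Y` turns the hypothesis into
`M - A M Aᵀ ⪰ 0`. Iterating, `M - Aᵏ M (Aᵏ)ᵀ ⪰ 0` for every `k`, and Gelfand's formula gives
`Aᵏ → 0` from `ρ(A) < 1`, so `M ⪰ 0` in the limit. The same limit argument shows that
`X ↦ A X Aᵀ` has no nonzero fixed point, which makes `Y` symmetric.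
-/

open Matrix
open scoped ENNReal

/-- Spectral radius of a real square matrix, computed over ℂ. -/
noncomputable def specRad {n : ℕ} (A : Matrix (Fin n) (Fin n) ℝ) : ℝ≥0∞ :=
  spectralRadius ℂ (A.map Complex.ofReal)

/-- A real square matrix is Schur stable if its spectral radius is `< 1`. -/
def IsSchur {n : ℕ} (A : Matrix (Fin n) (Fin n) ℝ) : Prop := specRad A < 1

open Filter Topology

theorem tendsto_pow_atTop_nhds_zero_of_spectralRadius_lt_one {𝔸 : Type*} [NormedRing 𝔸]
    [NormedAlgebra ℂ 𝔸] [CompleteSpace 𝔸] {a : 𝔸} (ha : spectralRadius ℂ a < 1) :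
    Tendsto (a ^ ·) atTop (𝓝 0) := by
  obtain ⟨r, hρr, hr1⟩ := ENNReal.lt_iff_exists_nnreal_btwn.1 ha
  have hgelfand :=
    (spectrum.pow_nnnorm_pow_one_div_tendsto_nhds_spectralRadius a).eventually_lt_const hρr
  refine squeeze_zero_norm' ?_
    (tendsto_pow_atTop_nhds_zero_of_lt_one r.coe_nonneg (by exact_mod_cast hr1))
  filter_upwards [hgelfand, eventually_gt_atTop 0] with k hk hk0
  rw [one_div, ENNReal.rpow_inv_lt_iff (by positivity), ENNReal.rpow_natCast, ← ENNReal.coe_pow,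
    ENNReal.coe_lt_coe] at hk
  exact_mod_cast hk.le

theorem IsSchur.tendsto_pow_atTop_nhds_zero {n : ℕ} {A : Matrix (Fin n) (Fin n) ℝ}
    (hA : IsSchur A) : Tendsto (A ^ ·) atTop (𝓝 0) := by
  let := Matrix.linftyOpNormedRing (n := Fin n) (α := ℂ)
  let := Matrix.linftyOpNormedAlgebra (n := Fin n) (R := ℂ) (α := ℂ)
  have : CompleteSpace (Matrix (Fin n) (Fin n) ℂ) := FiniteDimensional.complete ℂ _
  have hB := tendsto_pow_atTop_nhds_zero_of_spectralRadius_lt_one hA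
  have hre : Continuous fun B : Matrix (Fin n) (Fin n) ℂ => B.map Complex.re :=
    continuous_id.matrix_map Complex.continuous_re
  convert (hre.tendsto 0).comp hB using 2 with k
  · have hpow : A.map Complex.ofReal ^ k = (A ^ k).map Complex.ofReal :=
      (map_pow Complex.ofRealHom.mapMatrix A k).symm
    simp [hpow, Function.comp_def]
  · simp

namespace Matrix

variable {m : Type*} [Fintype m] [DecidableEq m] {A : Matrix m m ℝ}

theorem pow_mul_mul_transpose_pow_eq_self {D : Matrix m m ℝ} (hD : A * D * Aᵀ = D) (k : ℕ) :
    A ^ k * D * (A ^ k)ᵀ = D := by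
  induction k with
  | zero => simp
  | succ k ih =>
    calc A ^ (k + 1) * D * (A ^ (k + 1))ᵀ = A * (A ^ k * D * (A ^ k)ᵀ) * Aᵀ := by
          simp only [pow_succ', transpose_mul, Matrix.mul_assoc]
      _ = D := by rw [ih, hD]

theorem tendsto_pow_mul_mul_transpose_pow (hA : Tendsto (A ^ ·) atTop (𝓝 0)) (M : Matrix m m ℝ) :
    Tendsto (fun k => A ^ k * M * (A ^ k)ᵀ) atTop (𝓝 0) := by
  have hcont : Continuous fun N : Matrix m m ℝ => N * M * Nᵀ := by fun_prop
  simpa [Function.comp_def] using (hcont.tendsto 0).comp hA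

theorem eq_zero_of_mul_mul_transpose_eq_self (hA : Tendsto (A ^ ·) atTop (𝓝 0))
    {D : Matrix m m ℝ} (hD : A * D * Aᵀ = D) : D = 0 := by
  refine tendsto_nhds_unique ?_ (tendsto_pow_mul_mul_transpose_pow hA D)
  simp_rw [pow_mul_mul_transpose_pow_eq_self hD, tendsto_const_nhds]

theorem isSymm_of_lyapunov (hA : Tendsto (A ^ ·) atTop (𝓝 0)) {Sig Y : Matrix m m ℝ}
    (hSig : Sig.IsSymm) (hY : A * Y * Aᵀ + Sig = Y) : Y.IsSymm := by
  have hYT : A * Yᵀ * Aᵀ + Sig = Yᵀ := by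
    simpa [hSig.eq, Matrix.mul_assoc] using congrArg transpose hY
  refine (sub_eq_zero.1 (eq_zero_of_mul_mul_transpose_eq_self hA ?_)).symm
  calc A * (Y - Yᵀ) * Aᵀ = (A * Y * Aᵀ + Sig) - (A * Yᵀ * Aᵀ + Sig) := by
        rw [Matrix.mul_sub, Matrix.sub_mul]; abel
    _ = Y - Yᵀ := by rw [hY, hYT]

theorem PosSemidef.sub_pow_mul_mul_transpose_pow {M : Matrix m m ℝ}
    (h : (M - A * M * Aᵀ).PosSemidef) (k : ℕ) : (M - A ^ k * M * (A ^ k)ᵀ).PosSemidef := by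
  induction k with
  | zero => simpa using PosSemidef.zero
  | succ k ih =>
    have hstep : M - A ^ (k + 1) * M * (A ^ (k + 1))ᵀ
        = (M - A * M * Aᵀ) + A * (M - A ^ k * M * (A ^ k)ᵀ) * Aᵀ := by
      simp only [pow_succ', transpose_mul, Matrix.mul_sub, Matrix.sub_mul, Matrix.mul_assoc]
      abel
    rw [hstep]
    exact h.add (by simpa using ih.mul_mul_conjTranspose_same A)

theorem posSemidef_of_posSemidef_sub_mul_mul_transpose (hA : Tendsto (A ^ ·) atTop (𝓝 0))
    {M : Matrix m m ℝ} (hM : M.IsHermitian) (h : (M - A * M * Aᵀ).PosSemidef) : M.PosSemidef := by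
  refine .of_dotProduct_mulVec_nonneg hM fun x => ?_
  have hquad : Continuous fun N : Matrix m m ℝ => x ⬝ᵥ (N *ᵥ x) := by fun_prop
  have hlim := (hquad.tendsto 0).comp (tendsto_pow_mul_mul_transpose_pow hA M)
  simp only [Function.comp_def, zero_mulVec, dotProduct_zero] at hlim
  rw [star_trivial]
  refine le_of_tendsto' hlim fun k => ?_
  have hk := (h.sub_pow_mul_mul_transpose_pow k).dotProduct_mulVec_nonneg x
  simpa only [sub_mulVec, dotProduct_sub, star_trivial, sub_nonneg] using hk

end Matrix

theorem stmt18_general {n : ℕ} (A Sig Y Z : Matrix (Fin n) (Fin n) ℝ) (c : ℝ)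
    (hA : IsSchur A) (hSig : Sig.PosDef)
    (hY : A * Y * Aᵀ + Sig = Y)
    (hZ : Zᵀ = Z)
    (h : (c • Sig - (Z - A * Z * Aᵀ)).PosSemidef) :
    (c • Y - Z).PosSemidef := by
  have hpow := hA.tendsto_pow_atTop_nhds_zero
  have hYsymm : Y.IsSymm :=
    isSymm_of_lyapunov hpow (isHermitian_iff_isSymm.1 hSig.isHermitian) hY
  have hM : (c • Y - Z).IsHermitian :=
    isHermitian_iff_isSymm.2 ((hYsymm.smul c).sub hZ)
  refine posSemidef_of_posSemidef_sub_mul_mul_transpose hpow hM ?_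
  convert h using 1
  nth_rw 1 [← hY]
  simp only [Matrix.mul_sub, Matrix.sub_mul, Matrix.mul_smul, Matrix.smul_mul, smul_add]
  abel

/-- Comparison lemma: if `A` is Schur, `Y` solves `AYAᵀ + Σ = Y` with `Σ ≻ 0`,
`Z` is symmetric, `c ≥ 0`, and `Z − AZAᵀ ⪯ c·Σ`, then `Z ⪯ c·Y`. -/
theorem stmt18 {n : ℕ} (A Sig Y Z : Matrix (Fin n) (Fin n) ℝ) (c : ℝ)
    (hA : IsSchur A) (hSig : Sig.PosDef)
    (hY : A * Y * Aᵀ + Sig = Y)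
    (hZ : Zᵀ = Z) (hc : 0 ≤ c)
    (h : (c • Sig - (Z - A * Z * Aᵀ)).PosSemidef) :
    (c • Y - Z).PosSemidef :=
  stmt18_general A Sig Y Z c hA hSig hY hZ h
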